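/- Let (X,‖·‖,τ) satisfy the standard assumptions (τ coarser Hausdorff locally convex, sequentially complete on norm-bounded sets, with (X,τ)' norming). If f : [a,b] → X is τ-continuous and norm-bounded, then f is τ-Riemann integrable on [a,b], the Riemann sums also converge in the mixed topology γ(‖·‖,τ), and the resulting integral x satisfies ⟨x', x⟩ = ∫_a^b ⟨x', f(s)⟩ ds for every x' ∈ (X,γ)' (i.e., x is a γ-Pettis integral of f). -/

import Mathlib

/-!
For two tagged partitions of mesh `< δ`, both Riemann sums are sums over the cells of the common
refinement, so their difference is `(b - a)` times a convex combination of increments `f s - f r`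
with `|s - r| < 2δ`. As `f` is uniformly `τ`-continuous on `[a, b]` and `τ` is locally convex, the
Riemann sums are therefore `τ`-Cauchy as the mesh tends to `0`. They lie in the norm ball of radius
`(b - a) sup ‖f‖`, so sequential completeness on bounded sets gives a `τ`-limit `x`; the ball is
`τ`-closed because the `τ`-dual is norming, so `x` lies in it too. On this ball `τ` and `γ` agree,
hence the sums converge to `x` in `γ` as well and `f` is `γ`-continuous. A `γ`-continuous functional
`g` maps the Riemann sums of `f` to those of the continuous function `g ∘ f`, which converge to
`∫ g ∘ f`.
-/

noncomputable section

open Filter Topology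

/-- The norm dual `X' = X →L[ℝ] ℝ` of `X` (with the operator norm); the topology on `X`
here is the norm topology, irrespective of any other topology in scope. -/
abbrev wDualR (X : Type*) [NormedAddCommGroup X] [NormedSpace ℝ X] : Type _ := X →L[ℝ] ℝ

/-- A sequence is Cauchy with respect to a given (group) topology `t`. -/
def SeqCauchyIn {X : Type*} [AddCommGroup X] (t : TopologicalSpace X) (u : ℕ → X) : Prop :=
  ∀ U ∈ @nhds X t 0, ∃ N : ℕ, ∀ m ≥ N, ∀ n ≥ N, u m - u n ∈ U

/-- `γ` is the mixed topology `γ(‖·‖, τ)`: the finest linear topology agreeing with `τ` on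
norm-bounded sets and lying between `τ` and the norm topology. -/
structure IsMixedTopology (X : Type*) [NormedAddCommGroup X] [NormedSpace ℝ X]
    (τ γ : TopologicalSpace X) : Prop where
  le_tau : γ ≤ τ
  norm_le : (UniformSpace.toTopologicalSpace : TopologicalSpace X) ≤ γ
  addGroup : @IsTopologicalAddGroup X γ _
  contSMul : @ContinuousSMul ℝ X _ _ γ
  agrees : ∀ B : Set X, Bornology.IsBounded B →
    TopologicalSpace.induced ((↑) : B → X) γ = TopologicalSpace.induced ((↑) : B → X) τ
  finest : ∀ γ' : TopologicalSpace X, @IsTopologicalAddGroup X γ' _ →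
    @ContinuousSMul ℝ X _ _ γ' →
    (UniformSpace.toTopologicalSpace : TopologicalSpace X) ≤ γ' → γ' ≤ τ →
    (∀ B : Set X, Bornology.IsBounded B →
      TopologicalSpace.induced ((↑) : B → X) γ' = TopologicalSpace.induced ((↑) : B → X) τ) →
    γ ≤ γ'

/-- A topology `t` on `X` makes `X` a Mazur space if every `t`-sequentially continuous linear
functional is `t`-continuous. -/
def MazurIn (X : Type*) [NormedAddCommGroup X] [NormedSpace ℝ X]
    (t : TopologicalSpace X) : Prop :=
  ∀ f : X →ₗ[ℝ] ℝ,
    (∀ (u : ℕ → X) (x : X), Filter.Tendsto u Filter.atTop (@nhds X t x) →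
      Filter.Tendsto (fun n => f (u n)) Filter.atTop (nhds (f x))) →
    @Continuous X ℝ t _ ⇑f

/-- `(X, ‖·‖, τ)` is a Saks space: `τ` is generated by a directed family of seminorms `p`
with `‖x‖ = sup_i p i x`. -/
def IsSaksSpace (X : Type*) [NormedAddCommGroup X] [NormedSpace ℝ X]
    (τ : TopologicalSpace X) : Prop :=
  ∃ (ι : Type) (hι : Nonempty ι) (p : SeminormFamily ℝ X ι),
    Directed (· ≤ ·) p ∧ WithSeminorms (topology := τ) p ∧
    ∀ x : X, IsLUB (Set.range fun i => p i x) ‖x‖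

/-- The Riemann sum of `f` for the tagged partition `(t, ξ)` with `n` subintervals. -/
def RiemannSum {X : Type*} [NormedAddCommGroup X] [NormedSpace ℝ X]
    (f : ℝ → X) (n : ℕ) (t ξ : ℕ → ℝ) : X :=
  ∑ i ∈ Finset.range n, (t (i + 1) - t i) • f (ξ i)

/-- `(t, ξ)` is a tagged partition of `[a,b]` into `n` subintervals of mesh `< δ`. -/
def IsTaggedPartition (a b : ℝ) (n : ℕ) (t ξ : ℕ → ℝ) (δ : ℝ) : Prop :=
  t 0 = a ∧ t n = b ∧ (∀ i < n, t i ≤ t (i + 1)) ∧ (∀ i < n, t (i + 1) - t i < δ) ∧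
    ∀ i < n, ξ i ∈ Set.Icc (t i) (t (i + 1))

/-- `x` is the Riemann integral of `f` over `[a,b]` with respect to the topology `top`:
the Riemann sums converge to `x` in `top` as the mesh tends to `0`. -/
def HasRiemannIntegralIn {X : Type*} [NormedAddCommGroup X] [NormedSpace ℝ X]
    (top : TopologicalSpace X) (f : ℝ → X) (a b : ℝ) (x : X) : Prop :=
  ∀ U ∈ @nhds X top x, ∃ δ > (0:ℝ), ∀ (n : ℕ) (t ξ : ℕ → ℝ),
    IsTaggedPartition a b n t ξ δ → RiemannSum f n t ξ ∈ U


namespace IsTaggedPartition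

variable {a b δ : ℝ} {n : ℕ} {t ξ : ℕ → ℝ}

lemma mono {δ' : ℝ} (hP : IsTaggedPartition a b n t ξ δ) (hδ : δ ≤ δ') :
    IsTaggedPartition a b n t ξ δ' :=
  ⟨hP.1, hP.2.1, hP.2.2.1, fun i hi => (hP.2.2.2.1 i hi).trans_le hδ, hP.2.2.2.2⟩

lemma monotoneOn (hP : IsTaggedPartition a b n t ξ δ) : MonotoneOn t (Set.Iic n) :=
  monotoneOn_of_le_succ Set.ordConnected_Iic fun i _ _ hi =>
    by simpa using hP.2.2.1 i (by simpa [Order.succ_eq_add_one] using hi)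

lemma mem_Icc (hP : IsTaggedPartition a b n t ξ δ) {i : ℕ} (hi : i ≤ n) : t i ∈ Set.Icc a b := by
  refine ⟨?_, ?_⟩
  · simpa [hP.1] using hP.monotoneOn (Set.mem_Iic.2 (Nat.zero_le n)) hi (Nat.zero_le i)
  · simpa [hP.2.1] using hP.monotoneOn hi (Set.mem_Iic.2 le_rfl) hi

lemma Icc_subset (hP : IsTaggedPartition a b n t ξ δ) {i : ℕ} (hi : i < n) :
    Set.Icc (t i) (t (i + 1)) ⊆ Set.Icc a b :=
  Set.Icc_subset_Icc (hP.mem_Icc hi.le).1 (hP.mem_Icc hi).2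

lemma tag_mem_Icc (hP : IsTaggedPartition a b n t ξ δ) {i : ℕ} (hi : i < n) :
    ξ i ∈ Set.Icc a b :=
  hP.Icc_subset hi (hP.2.2.2.2 i hi)

lemma sum_sub_eq (hP : IsTaggedPartition a b n t ξ δ) :
    ∑ i ∈ Finset.range n, (t (i + 1) - t i) = b - a := by
  rw [Finset.sum_range_sub t n, hP.2.1, hP.1]

end IsTaggedPartition

/-- The length of `[s, s'] ∩ [u, u']`. -/
def intervalOverlap (s s' u u' : ℝ) : ℝ := max 0 (min s' u' - max s u)

lemma intervalOverlap_comm (s s' u u' : ℝ) :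
    intervalOverlap s s' u u' = intervalOverlap u u' s s' := by
  simp only [intervalOverlap, min_comm s', max_comm s]

lemma intervalOverlap_nonneg (s s' u u' : ℝ) : 0 ≤ intervalOverlap s s' u u' := le_max_left _ _

/-- The overlap is the increment of the projection onto `[s, s']`, so it telescopes. -/
lemma intervalOverlap_eq_sub {s s' u u' : ℝ} (hs : s ≤ s') (hu : u ≤ u') :
    intervalOverlap s s' u u' = max s (min s' u') - max s (min s' u) := by
  simp only [intervalOverlap, max_def, min_def]
  split_ifs <;> linarith

lemma exists_mem_of_intervalOverlap_ne_zero {s s' u u' : ℝ}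
    (h : intervalOverlap s s' u u' ≠ 0) : ∃ p ∈ Set.Icc s s', p ∈ Set.Icc u u' := by
  have : max s u ≤ min s' u' := by
    by_contra! hlt
    exact h (max_eq_left (by linarith))
  exact ⟨max s u, ⟨le_max_left _ _, this.trans (min_le_left _ _)⟩,
    le_max_right _ _, this.trans (min_le_right _ _)⟩

lemma IsTaggedPartition.sum_intervalOverlap {a b δ : ℝ} {n : ℕ} {t ξ : ℕ → ℝ}
    (hP : IsTaggedPartition a b n t ξ δ) {s s' : ℝ} (hs : a ≤ s) (hss' : s ≤ s') (hs' : s' ≤ b) :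
    ∑ i ∈ Finset.range n, intervalOverlap s s' (t i) (t (i + 1)) = s' - s := by
  rw [Finset.sum_congr rfl fun i hi =>
    intervalOverlap_eq_sub hss' (hP.2.2.1 i (Finset.mem_range.1 hi)),
    Finset.sum_range_sub (fun x => max s (min s' (t x))), hP.1, hP.2.1]
  simp [min_eq_left hs', min_eq_right (hs.trans hss'), max_eq_right hss', max_eq_left hs]

lemma Convex.sum_mem_of_ne_zero {E ι : Type*} [AddCommGroup E] [Module ℝ E] {S : Set E}
    (hS : Convex ℝ S) {s : Finset ι} {w : ι → ℝ} {z : ι → E} (h₀ : ∀ i ∈ s, 0 ≤ w i)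
    (h₁ : ∑ i ∈ s, w i = 1) (hz : ∀ i ∈ s, w i ≠ 0 → z i ∈ S) : ∑ i ∈ s, w i • z i ∈ S := by
  classical
  rw [← Finset.sum_filter_of_ne (p := fun i => w i ≠ 0) fun i _ h hw => h (by simp [hw])]
  refine hS.sum_mem (fun i hi => h₀ i (Finset.mem_filter.1 hi).1) ?_
    fun i hi => hz i (Finset.mem_filter.1 hi).1 (Finset.mem_filter.1 hi).2
  rwa [Finset.sum_filter_ne_zero]

open scoped Pointwise

section RiemannSum

variable {X : Type*} [NormedAddCommGroup X] [NormedSpace ℝ X] {f : ℝ → X} {a b δ δ' : ℝ}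
  {n m : ℕ} {t ξ u η : ℕ → ℝ}

lemma IsTaggedPartition.sum_intervalOverlap_cell (hP : IsTaggedPartition a b n t ξ δ)
    (hQ : IsTaggedPartition a b m u η δ') {i : ℕ} (hi : i < n) :
    ∑ k ∈ Finset.range m, intervalOverlap (t i) (t (i + 1)) (u k) (u (k + 1)) = t (i + 1) - t i :=
  hQ.sum_intervalOverlap (hP.mem_Icc hi.le).1 (hP.2.2.1 i hi) (hP.mem_Icc hi).2

/-- Both Riemann sums are sums over the cells `[t i, t (i+1)] ∩ [u k, u (k+1)]` of the common
refinement. -/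
lemma riemannSum_sub_riemannSum_eq (hP : IsTaggedPartition a b n t ξ δ)
    (hQ : IsTaggedPartition a b m u η δ') :
    RiemannSum f n t ξ - RiemannSum f m u η = ∑ i ∈ Finset.range n, ∑ k ∈ Finset.range m,
      intervalOverlap (t i) (t (i + 1)) (u k) (u (k + 1)) • (f (ξ i) - f (η k)) := by
  have hξ : ∑ i ∈ Finset.range n, ∑ k ∈ Finset.range m,
      intervalOverlap (t i) (t (i + 1)) (u k) (u (k + 1)) • f (ξ i) = RiemannSum f n t ξ := by
    refine Finset.sum_congr rfl fun i hi => ?_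
    rw [← Finset.sum_smul, hP.sum_intervalOverlap_cell hQ (Finset.mem_range.1 hi)]
  have hη : ∑ i ∈ Finset.range n, ∑ k ∈ Finset.range m,
      intervalOverlap (t i) (t (i + 1)) (u k) (u (k + 1)) • f (η k) = RiemannSum f m u η := by
    rw [Finset.sum_comm]
    refine Finset.sum_congr rfl fun k hk => ?_
    simp only [← Finset.sum_smul, intervalOverlap_comm (t _)]
    rw [hQ.sum_intervalOverlap_cell hP (Finset.mem_range.1 hk)]
  simp only [smul_sub, Finset.sum_sub_distrib, hξ, hη]

lemma IsTaggedPartition.abs_tag_sub_lt {p : ℝ} (hP : IsTaggedPartition a b n t ξ δ) {i : ℕ}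
    (hi : i < n) (hp : p ∈ Set.Icc (t i) (t (i + 1))) : |ξ i - p| < δ := by
  have hmesh := hP.2.2.2.1 i hi
  have htag := hP.2.2.2.2 i hi
  rw [abs_sub_lt_iff]
  constructor <;> linarith [hp.1, hp.2, htag.1, htag.2]

lemma riemannSum_sub_riemannSum_mem_smul {S : Set X} (hS : Convex ℝ S) (hab : a < b)
    (hf : ∀ s ∈ Set.Icc a b, ∀ r ∈ Set.Icc a b, |s - r| < 2 * δ → f s - f r ∈ S)
    (hP : IsTaggedPartition a b n t ξ δ) (hQ : IsTaggedPartition a b m u η δ) :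
    RiemannSum f n t ξ - RiemannSum f m u η ∈ (b - a) • S := by
  set w : ℕ × ℕ → ℝ := fun p => intervalOverlap (t p.1) (t (p.1 + 1)) (u p.2) (u (p.2 + 1))
  have hba : b - a ≠ 0 := sub_ne_zero.2 hab.ne'
  have hw : ∑ p ∈ Finset.range n ×ˢ Finset.range m, w p = b - a := by
    rw [Finset.sum_product, ← hP.sum_sub_eq]
    exact Finset.sum_congr rfl fun i hi => hP.sum_intervalOverlap_cell hQ (Finset.mem_range.1 hi)
  rw [riemannSum_sub_riemannSum_eq hP hQ, ← Finset.sum_product']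
  -- the weights of the convex combination are the overlap lengths divided by `b - a`
  refine ⟨∑ p ∈ Finset.range n ×ˢ Finset.range m, ((b - a)⁻¹ * w p) • (f (ξ p.1) - f (η p.2)),
    hS.sum_mem_of_ne_zero (fun p _ => ?_) ?_ ?_, ?_⟩
  · exact mul_nonneg (inv_nonneg.2 (sub_nonneg.2 hab.le)) (intervalOverlap_nonneg _ _ _ _)
  · rw [← Finset.mul_sum, hw, inv_mul_cancel₀ hba]
  · rintro ⟨i, k⟩ hik hw0
    obtain ⟨hi, hk⟩ := Finset.mem_product.1 hik
    simp only [Finset.mem_range] at hi hk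
    obtain ⟨p, hpP, hpQ⟩ := exists_mem_of_intervalOverlap_ne_zero (right_ne_zero_of_mul hw0)
    refine hf _ (hP.tag_mem_Icc hi) _ (hQ.tag_mem_Icc hk) ?_
    calc |ξ i - η k| ≤ |ξ i - p| + |p - η k| := abs_sub_le _ _ _
      _ < δ + δ := add_lt_add (hP.abs_tag_sub_lt hi hpP)
          (by rw [abs_sub_comm]; exact hQ.abs_tag_sub_lt hk hpQ)
      _ = 2 * δ := by ring
  · simp only [Finset.smul_sum, smul_smul, mul_inv_cancel_left₀ hba, w]

end RiemannSum

/-- The filter of tagged partitions `(n, t, ξ)` of `[a, b]` with mesh tending to `0`. -/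
def taggedPartitions (a b : ℝ) : Filter (ℕ × (ℕ → ℝ) × (ℕ → ℝ)) :=
  ⨅ δ > 0, 𝓟 {P | IsTaggedPartition a b P.1 P.2.1 P.2.2 δ}

def uniformPartition (a b : ℝ) (n : ℕ) : ℕ → ℝ := fun i => a + i * ((b - a) / n)

section TaggedPartitions

variable {a b : ℝ}

lemma hasBasis_taggedPartitions : (taggedPartitions a b).HasBasis (fun δ : ℝ => 0 < δ)
    fun δ => {P | IsTaggedPartition a b P.1 P.2.1 P.2.2 δ} :=
  hasBasis_biInf_principal' (fun δ hδ δ' hδ' => ⟨min δ δ', lt_min hδ hδ',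
    fun _ hP => hP.mono (min_le_left _ _), fun _ hP => hP.mono (min_le_right _ _)⟩) ⟨1, one_pos⟩

lemma hasRiemannIntegralIn_iff_tendsto {X : Type*} [NormedAddCommGroup X] [NormedSpace ℝ X]
    {top : TopologicalSpace X} {f : ℝ → X} {x : X} :
    HasRiemannIntegralIn top f a b x ↔ Tendsto (fun P => RiemannSum f P.1 P.2.1 P.2.2)
      (taggedPartitions a b) (@nhds X top x) := by
  simp only [hasBasis_taggedPartitions.tendsto_left_iff, HasRiemannIntegralIn, Set.MapsTo,
    Set.mem_ofPred_eq, Prod.forall]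

lemma isTaggedPartition_uniformPartition {n : ℕ} {δ : ℝ} (hab : a ≤ b) (hn : n ≠ 0)
    (hδ : (b - a) / n < δ) :
    IsTaggedPartition a b n (uniformPartition a b n) (uniformPartition a b n) δ := by
  have hstep : ∀ i : ℕ, uniformPartition a b n (i + 1) - uniformPartition a b n i = (b - a) / n :=
    fun i => by simp only [uniformPartition]; push_cast; ring
  have hh : 0 ≤ (b - a) / n := div_nonneg (sub_nonneg.2 hab) n.cast_nonneg
  refine ⟨by simp [uniformPartition], ?_, fun i _ => ?_, fun i _ => (hstep i).trans_lt hδ,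
    fun i _ => ⟨le_rfl, ?_⟩⟩
  · simp only [uniformPartition]; field_simp; ring
  all_goals linarith [hstep i]

lemma tendsto_uniformPartition (hab : a ≤ b) :
    Tendsto (fun n => (n, uniformPartition a b n, uniformPartition a b n)) atTop
      (taggedPartitions a b) := by
  refine hasBasis_taggedPartitions.tendsto_right_iff.2 fun δ hδ => ?_
  filter_upwards [eventually_ne_atTop 0,
    (tendsto_const_div_atTop_nhds_zero_nat (b - a)).eventually (gt_mem_nhds hδ)] with n hn hδn
  exact isTaggedPartition_uniformPartition hab hn hδn

lemma taggedPartitions_neBot (hab : a ≤ b) : (taggedPartitions a b).NeBot :=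
  (tendsto_uniformPartition hab).neBot

end TaggedPartitions

lemma IsCompact.exists_forall_sub_mem_of_continuousOn {α G : Type*} [PseudoMetricSpace α]
    [AddCommGroup G] [TopologicalSpace G] [IsTopologicalAddGroup G] {K : Set α}
    (hK : IsCompact K) {f : α → G} (hf : ContinuousOn f K) {U : Set G} (hU : U ∈ 𝓝 0) :
    ∃ δ > 0, ∀ s ∈ K, ∀ r ∈ K, dist s r < δ → f s - f r ∈ U := by
  let : UniformSpace G := IsTopologicalAddGroup.rightUniformSpace G
  have : IsUniformAddGroup G := isUniformAddGroup_of_addCommGroup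
  have hE : {p : G × G | p.1 - p.2 ∈ U} ∈ uniformity G := by
    rw [uniformity_eq_comap_nhds_zero_swapped G]
    exact Filter.preimage_mem_comap hU
  obtain ⟨δ, hδ, hfδ⟩ := (Metric.uniformity_basis_dist.uniformContinuousOn_iff
    (uniformity G).basis_sets).1 (hK.uniformContinuousOn_of_continuous hf) _ hE
  exact ⟨δ, hδ, hfδ⟩

lemma Filter.Tendsto.of_tendsto_sub_of_tendsto_comp {α β G : Type*} [AddCommGroup G]
    [TopologicalSpace G] [IsTopologicalAddGroup G] {l : Filter α} {l' : Filter β} [l'.NeBot]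
    {v : α → G} {φ : β → α} {x : G} (hv : Tendsto (fun p : α × α => v p.1 - v p.2) (l ×ˢ l) (𝓝 0))
    (hφ : Tendsto φ l' l) (hx : Tendsto (v ∘ φ) l' (𝓝 x)) : Tendsto v l (𝓝 x) := by
  have hvφ : Tendsto (fun p : α × β => v p.1 - v (φ p.2)) (l ×ˢ l') (𝓝 0) :=
    hv.comp (tendsto_id.prodMap hφ)
  have hfst : Tendsto (fun p : α × β => v p.1) (l ×ˢ l') (𝓝 x) := by
    simpa using hvφ.add (hx.comp tendsto_snd)
  rwa [← map_fst_prod l l', tendsto_map'_iff]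

section TauRiemann

variable {X : Type*} [NormedAddCommGroup X] [NormedSpace ℝ X] (τ : TopologicalSpace X)
  {f : ℝ → X} {a b : ℝ}

lemma tendsto_riemannSum_sub_riemannSum (haddgrp : @IsTopologicalAddGroup X τ _)
    (hsmul : @ContinuousSMul ℝ X _ _ τ) (hlc : @LocallyConvexSpace ℝ X _ _ _ _ τ) (hab : a < b)
    (hf : @ContinuousOn ℝ X _ τ f (Set.Icc a b)) :
    Tendsto (fun PQ : (ℕ × (ℕ → ℝ) × (ℕ → ℝ)) × (ℕ × (ℕ → ℝ) × (ℕ → ℝ)) =>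
        RiemannSum f PQ.1.1 PQ.1.2.1 PQ.1.2.2 - RiemannSum f PQ.2.1 PQ.2.2.1 PQ.2.2.2)
      (taggedPartitions a b ×ˢ taggedPartitions a b) (@nhds X τ 0) := by
  let : TopologicalSpace X := τ
  have hba : b - a ≠ 0 := sub_ne_zero.2 hab.ne'
  rw [hasBasis_taggedPartitions.prod_self.tendsto_left_iff]
  intro W hW
  obtain ⟨S, hS, hSconv, hSW⟩ := (locallyConvexSpace_iff_exists_convex_subset_zero ℝ X).1 hlc _
    ((set_smul_mem_nhds_zero_iff (inv_ne_zero hba)).2 hW)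
  obtain ⟨δ, hδ, hfδ⟩ := isCompact_Icc.exists_forall_sub_mem_of_continuousOn hf hS
  refine ⟨δ / 2, half_pos hδ, fun PQ hPQ => ?_⟩
  have hdiff := riemannSum_sub_riemannSum_mem_smul hSconv hab
    (fun s hs r hr hsr => hfδ s hs r hr (by rw [Real.dist_eq]; linarith))
    hPQ.1 hPQ.2
  simpa [smul_inv_smul₀ hba] using Set.smul_set_mono (a := b - a) hSW hdiff

lemma norm_riemannSum_le {C δ : ℝ} {n : ℕ} {t ξ : ℕ → ℝ} (hC : ∀ s ∈ Set.Icc a b, ‖f s‖ ≤ C)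
    (hP : IsTaggedPartition a b n t ξ δ) : ‖RiemannSum f n t ξ‖ ≤ (b - a) * C := by
  rw [← hP.sum_sub_eq, Finset.sum_mul]
  refine (norm_sum_le _ _).trans (Finset.sum_le_sum fun i hi => ?_)
  have hi := Finset.mem_range.1 hi
  rw [norm_smul, Real.norm_of_nonneg (sub_nonneg.2 (hP.2.2.1 i hi))]
  exact mul_le_mul_of_nonneg_left (hC _ (hP.tag_mem_Icc hi)) (sub_nonneg.2 (hP.2.2.1 i hi))

/-- The Riemann sums along the uniform partitions form a norm-bounded `τ`-Cauchy sequence; its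
limit is the limit of all Riemann sums. -/
lemma exists_tendsto_riemannSum (haddgrp : @IsTopologicalAddGroup X τ _)
    (hseqcompl : ∀ u : ℕ → X, (∃ C, ∀ n, ‖u n‖ ≤ C) → SeqCauchyIn τ u →
      ∃ l : X, Filter.Tendsto u Filter.atTop (@nhds X τ l))
    {C : ℝ} (hab : a ≤ b) (hC : ∀ s ∈ Set.Icc a b, ‖f s‖ ≤ C)
    (hcauchy : Tendsto (fun PQ : (ℕ × (ℕ → ℝ) × (ℕ → ℝ)) × (ℕ × (ℕ → ℝ) × (ℕ → ℝ)) =>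
        RiemannSum f PQ.1.1 PQ.1.2.1 PQ.1.2.2 - RiemannSum f PQ.2.1 PQ.2.2.1 PQ.2.2.2)
      (taggedPartitions a b ×ˢ taggedPartitions a b) (@nhds X τ 0)) :
    ∃ x, Tendsto (fun P => RiemannSum f P.1 P.2.1 P.2.2) (taggedPartitions a b)
      (@nhds X τ x) := by
  let : TopologicalSpace X := τ
  let φ : ℕ → ℕ × (ℕ → ℝ) × (ℕ → ℝ) :=
    fun n => (n + 1, uniformPartition a b (n + 1), uniformPartition a b (n + 1))
  have hφ : Tendsto φ atTop (taggedPartitions a b) :=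
    (tendsto_uniformPartition hab).comp (tendsto_add_atTop_nat 1)
  have hbdd : ∀ n, ‖RiemannSum f (φ n).1 (φ n).2.1 (φ n).2.2‖ ≤ (b - a) * C := fun n =>
    norm_riemannSum_le hC (isTaggedPartition_uniformPartition hab n.succ_ne_zero
      (lt_add_one ((b - a) / (n + 1 : ℕ))))
  have hcauchyφ : SeqCauchyIn τ fun n => RiemannSum f (φ n).1 (φ n).2.1 (φ n).2.2 := by
    intro U hU
    have h := hcauchy.comp (hφ.prodMap hφ) hU
    rw [prod_atTop_atTop_eq] at h
    exact eventually_atTop_prod_self'.1 h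
  obtain ⟨x, hx⟩ := hseqcompl _ ⟨_, hbdd⟩ hcauchyφ
  exact ⟨x, hcauchy.of_tendsto_sub_of_tendsto_comp hφ hx⟩

end TauRiemann

section MixedTopology

variable {X : Type*} {τ γ : TopologicalSpace X} {B : Set X}

lemma nhdsWithin_eq_of_induced_eq
    (hB : TopologicalSpace.induced ((↑) : B → X) γ = TopologicalSpace.induced ((↑) : B → X) τ)
    {x : X} (hx : x ∈ B) : @nhdsWithin X γ x B = @nhdsWithin X τ x B := by
  rw [@nhdsWithin_eq_map_subtype_coe X γ _ _ hx, @nhdsWithin_eq_map_subtype_coe X τ _ _ hx]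
  exact congrArg (map _) (congrArg (fun t => @nhds B t ⟨x, hx⟩) hB)

lemma tendsto_nhds_of_induced_eq {α : Type*} {l : Filter α} {v : α → X} {x : X}
    (hB : TopologicalSpace.induced ((↑) : B → X) γ = TopologicalSpace.induced ((↑) : B → X) τ)
    (hx : x ∈ B) (hvB : ∀ᶠ p in l, v p ∈ B) (hv : Tendsto v l (@nhds X τ x)) :
    Tendsto v l (@nhds X γ x) := by
  have hvτ : Tendsto v l (@nhdsWithin X τ x B) := @tendsto_nhdsWithin_iff _ _ τ _ _ _ |>.2 ⟨hv, hvB⟩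
  rw [← nhdsWithin_eq_of_induced_eq hB hx] at hvτ
  exact hvτ.mono_right (@nhdsWithin_le_nhds X γ x B)

lemma continuousOn_of_induced_eq {α : Type*} [TopologicalSpace α] {f : α → X} {s : Set α}
    (hB : TopologicalSpace.induced ((↑) : B → X) γ = TopologicalSpace.induced ((↑) : B → X) τ)
    (hfB : Set.MapsTo f s B) (hf : @ContinuousOn α X _ τ f s) : @ContinuousOn α X _ γ f s :=
  fun y hy => tendsto_nhds_of_induced_eq hB (hfB hy)
    (eventually_mem_nhdsWithin.mono fun _ hz => hfB hz) (hf y hy)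

end MixedTopology

lemma isClosed_closedBall_of_norming {X : Type*} [NormedAddCommGroup X] [NormedSpace ℝ X]
    (τ : TopologicalSpace X) (hnorming : ∀ x : X,
      IsLUB {r : ℝ | ∃ f : wDualR X, @Continuous X ℝ τ _ ⇑f ∧ ‖f‖ ≤ 1 ∧ r = |f x|} ‖x‖)
    (r : ℝ) : @IsClosed X τ (Metric.closedBall 0 r) := by
  let : TopologicalSpace X := τ
  have hball : Metric.closedBall (0 : X) r =
      ⋂ g ∈ {g : wDualR X | Continuous g ∧ ‖g‖ ≤ 1}, {y | |g y| ≤ r} := by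
    ext y
    simp only [Metric.mem_closedBall, dist_zero_right, Set.mem_iInter, Set.mem_ofPred_eq]
    refine ⟨fun hy g hg => ((hnorming y).1 ⟨g, hg.1, hg.2, rfl⟩).trans hy, fun h => ?_⟩
    exact (hnorming y).2 (by rintro _ ⟨g, hg, hg1, rfl⟩; exact h g ⟨hg, hg1⟩)
  rw [hball]
  exact isClosed_biInter fun g hg => isClosed_le (continuous_abs.comp hg.1) continuous_const

lemma map_riemannSum {X Y F : Type*} [NormedAddCommGroup X] [NormedSpace ℝ X]
    [NormedAddCommGroup Y] [NormedSpace ℝ Y] [FunLike F X Y] [LinearMapClass F ℝ X Y] (g : F)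
    (f : ℝ → X) (n : ℕ) (t ξ : ℕ → ℝ) :
    g (RiemannSum f n t ξ) = RiemannSum (fun s => g (f s)) n t ξ := by
  simp only [RiemannSum, map_sum, map_smul]

section Integral

variable {E : Type*} [NormedAddCommGroup E] [NormedSpace ℝ E] [CompleteSpace E] {φ : ℝ → E}
  {a b : ℝ}

lemma norm_smul_sub_integral_le {s s' p ε : ℝ} (hss' : s ≤ s')
    (hφ : IntervalIntegrable φ MeasureTheory.volume s s')
    (hε : ∀ r ∈ Set.Icc s s', ‖φ p - φ r‖ ≤ ε) :
    ‖(s' - s) • φ p - ∫ r in s..s', φ r‖ ≤ ε * (s' - s) := by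
  rw [← intervalIntegral.integral_const,
    ← intervalIntegral.integral_sub intervalIntegrable_const hφ]
  refine (intervalIntegral.norm_integral_le_of_norm_le_const fun r hr => hε r ?_).trans_eq
    (by rw [abs_of_nonneg (sub_nonneg.2 hss')])
  rw [Set.uIoc_of_le hss'] at hr
  exact Set.Ioc_subset_Icc_self hr

lemma norm_riemannSum_sub_integral_le {δ ε : ℝ} {n : ℕ} {t ξ : ℕ → ℝ}
    (hφ : ContinuousOn φ (Set.Icc a b))
    (hε : ∀ s ∈ Set.Icc a b, ∀ r ∈ Set.Icc a b, |s - r| < δ → ‖φ s - φ r‖ ≤ ε)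
    (hP : IsTaggedPartition a b n t ξ δ) :
    ‖RiemannSum φ n t ξ - ∫ s in a..b, φ s‖ ≤ ε * (b - a) := by
  have hint : ∀ i < n, IntervalIntegrable φ MeasureTheory.volume (t i) (t (i + 1)) :=
    fun i hi => (hφ.mono (by rw [Set.uIcc_of_le (hP.2.2.1 i hi)]; exact hP.Icc_subset hi)
      ).intervalIntegrable
  calc ‖RiemannSum φ n t ξ - ∫ s in a..b, φ s‖
      = ‖∑ i ∈ Finset.range n, ((t (i + 1) - t i) • φ (ξ i) - ∫ s in t i..t (i + 1), φ s)‖ := by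
        rw [Finset.sum_sub_distrib, intervalIntegral.sum_integral_adjacent_intervals hint, hP.1,
          hP.2.1, RiemannSum]
    _ ≤ ∑ i ∈ Finset.range n, ε * (t (i + 1) - t i) := by
        refine (norm_sum_le _ _).trans (Finset.sum_le_sum fun i hi => ?_)
        have hi := Finset.mem_range.1 hi
        exact norm_smul_sub_integral_le (hP.2.2.1 i hi) (hint i hi) fun r hr =>
          hε _ (hP.tag_mem_Icc hi) r (hP.Icc_subset hi hr) (hP.abs_tag_sub_lt hi hr)
    _ = ε * (b - a) := by rw [← Finset.mul_sum, hP.sum_sub_eq]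

lemma tendsto_riemannSum_integral (hab : a < b) (hφ : ContinuousOn φ (Set.Icc a b)) :
    Tendsto (fun P => RiemannSum φ P.1 P.2.1 P.2.2) (taggedPartitions a b)
      (𝓝 (∫ s in a..b, φ s)) := by
  refine (hasBasis_taggedPartitions.tendsto_iff Metric.nhds_basis_closedBall).2 fun ε hε => ?_
  obtain ⟨δ, hδ, hφδ⟩ := Metric.uniformContinuousOn_iff.1
    (isCompact_Icc.uniformContinuousOn_of_continuous hφ) _ (div_pos hε (sub_pos.2 hab))
  refine ⟨δ, hδ, fun P hP => ?_⟩
  rw [Metric.mem_closedBall, dist_eq_norm]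
  calc _ ≤ ε / (b - a) * (b - a) := norm_riemannSum_sub_integral_le hφ
          (fun s hs r hr hsr => by simpa [dist_eq_norm] using (hφδ s hs r hr hsr).le) hP
    _ = ε := div_mul_cancel₀ _ (sub_ne_zero.2 hab.ne')

end Integral

theorem riemann_pettis_integral_of_tau_continuous_general
    {X : Type*} [NormedAddCommGroup X] [NormedSpace ℝ X]
    (τ γ : TopologicalSpace X)
    (haddgrp : @IsTopologicalAddGroup X τ _)
    (hsmul : @ContinuousSMul ℝ X _ _ τ) (hlc : @LocallyConvexSpace ℝ X _ _ _ _ τ)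
    (hseqcompl : ∀ u : ℕ → X, (∃ C, ∀ n, ‖u n‖ ≤ C) → SeqCauchyIn τ u →
      ∃ l : X, Filter.Tendsto u Filter.atTop (@nhds X τ l))
    (hnorming : ∀ x : X,
      IsLUB {r : ℝ | ∃ f : wDualR X, @Continuous X ℝ τ _ ⇑f ∧ ‖f‖ ≤ 1 ∧ r = |f x|} ‖x‖)
    (hmix : IsMixedTopology X τ γ)
    (a b : ℝ) (hab : a < b) (f : ℝ → X)
    (hfc : @ContinuousOn ℝ X _ τ f (Set.Icc a b))
    (hfb : ∃ C : ℝ, ∀ s ∈ Set.Icc a b, ‖f s‖ ≤ C) :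
    ∃ x : X, HasRiemannIntegralIn τ f a b x ∧ HasRiemannIntegralIn γ f a b x ∧
      ∀ g : wDualR X, @Continuous X ℝ γ _ ⇑g →
        IntervalIntegrable (fun s => g (f s)) MeasureTheory.volume a b ∧
        g x = ∫ s in a..b, g (f s) := by
  obtain ⟨C, hC⟩ := hfb
  have := taggedPartitions_neBot hab.le
  obtain ⟨x, hxτ⟩ := exists_tendsto_riemannSum τ haddgrp hseqcompl hab.le hC
    (tendsto_riemannSum_sub_riemannSum τ haddgrp hsmul hlc hab hfc)
  have hsumB : ∀ᶠ P in taggedPartitions a b,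
      RiemannSum f P.1 P.2.1 P.2.2 ∈ Metric.closedBall 0 ((b - a) * C) :=
    hasBasis_taggedPartitions.eventually_iff.2 ⟨1, one_pos, fun P hP =>
      mem_closedBall_zero_iff.2 (norm_riemannSum_le hC hP)⟩
  have hxB : x ∈ Metric.closedBall 0 ((b - a) * C) := @IsClosed.mem_of_tendsto _ τ _ _ _ _ _ _
    (isClosed_closedBall_of_norming τ hnorming _) hxτ hsumB
  have hxγ := tendsto_nhds_of_induced_eq (hmix.agrees _ Metric.isBounded_closedBall) hxB hsumB hxτ
  have hfγ : @ContinuousOn ℝ X _ γ f (Set.Icc a b) :=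
    continuousOn_of_induced_eq (hmix.agrees _ Metric.isBounded_closedBall)
      (fun s hs => mem_closedBall_zero_iff.2 (hC s hs)) hfc
  refine ⟨x, hasRiemannIntegralIn_iff_tendsto.2 hxτ, hasRiemannIntegralIn_iff_tendsto.2 hxγ,
    fun g hg => ?_⟩
  have hgf : ContinuousOn (fun s => g (f s)) (Set.Icc a b) :=
    @Continuous.comp_continuousOn _ _ _ _ γ _ _ _ _ hg hfγ
  refine ⟨hgf.intervalIntegrable_of_Icc hab.le, tendsto_nhds_unique ?_
    (tendsto_riemannSum_integral hab hgf)⟩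
  simpa only [Function.comp_def, map_riemannSum] using
    (@Continuous.tendsto X ℝ γ _ g hg x).comp hxγ

/-- A `τ`-continuous norm-bounded function on `[a,b]` is `τ`- and `γ`-Riemann integrable,
with the same integral `x`, and `x` is also the `γ`-Pettis integral of `f`. -/
theorem riemann_pettis_integral_of_tau_continuous
    {X : Type*} [NormedAddCommGroup X] [NormedSpace ℝ X] [CompleteSpace X]
    (τ γ : TopologicalSpace X)
    (hcoarser : (UniformSpace.toTopologicalSpace : TopologicalSpace X) ≤ τ)
    (ht2 : @T2Space X τ) (haddgrp : @IsTopologicalAddGroup X τ _)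
    (hsmul : @ContinuousSMul ℝ X _ _ τ) (hlc : @LocallyConvexSpace ℝ X _ _ _ _ τ)
    (hseqcompl : ∀ u : ℕ → X, (∃ C, ∀ n, ‖u n‖ ≤ C) → SeqCauchyIn τ u →
      ∃ l : X, Filter.Tendsto u Filter.atTop (@nhds X τ l))
    (hnorming : ∀ x : X,
      IsLUB {r : ℝ | ∃ f : wDualR X, @Continuous X ℝ τ _ ⇑f ∧ ‖f‖ ≤ 1 ∧ r = |f x|} ‖x‖)
    (hmix : IsMixedTopology X τ γ)
    (a b : ℝ) (hab : a < b) (f : ℝ → X)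
    (hfc : @ContinuousOn ℝ X _ τ f (Set.Icc a b))
    (hfb : ∃ C : ℝ, ∀ s ∈ Set.Icc a b, ‖f s‖ ≤ C) :
    ∃ x : X, HasRiemannIntegralIn τ f a b x ∧ HasRiemannIntegralIn γ f a b x ∧
      ∀ g : wDualR X, @Continuous X ℝ γ _ ⇑g →
        IntervalIntegrable (fun s => g (f s)) MeasureTheory.volume a b ∧
        g x = ∫ s in a..b, g (f s) :=
  riemann_pettis_integral_of_tau_continuous_general τ γ haddgrp hsmul hlc hseqcompl hnorming hmix a
    b hab f hfc hfb

end
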